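/- Assume the density ratio model (G_0, …, G_m Borel probability measures on ℝ; q : ℝ → ℝ^d Borel measurable; θ_0 = 0, θ_1, …, θ_m ∈ ℝ^d; G_k with density exp(θ_kᵀ q(·)) with respect to G_0; ρ_0, …, ρ_m > 0, Σ ρ_k = 1; h = Σ_k ρ_k exp(θ_kᵀ q), h_k = ρ_k exp(θ_kᵀ q)/h; Ḡ = Σ_k ρ_k G_k; ∫ ‖q‖² dḠ < ∞), with a_{rs}(x) = ∫_{(−∞,x]} (δ_{rs} h_r − h_r h_s) dḠ, B_r(x) ∈ ℝ^{md} the block vector with sth block ∫_{(−∞,x]} (δ_{rs} h_r − h_r h_s) q dḠ, and W the md × md block matrix with blocks W_{rs} = ∫ (δ_{rs} h_r − h_r h_s) q qᵀ dḠ, assumed invertible. Fix 0 ≤ r, s ≤ m, reals ξ_r, ξ_s, and positive reals g_r, g_s (the density values of G_r at ξ_r and of G_s at ξ_s). Then the 2 × 2 matrix with (1,1) entry [a_{rr}(ξ_r) − B_r(ξ_r)ᵀ W^{-1} B_r(ξ_r)]/(ρ_r² g_r²), (2,2) entry [a_{ss}(ξ_s) − B_s(ξ_s)ᵀ W^{-1}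 B_s(ξ_s)]/(ρ_s² g_s²), and off-diagonal entries [a_{rs}(min{ξ_r, ξ_s}) − B_r(ξ_r)ᵀ W^{-1} B_s(ξ_s)]/(ρ_r ρ_s g_r g_s) is positive semidefinite. -/

import Mathlib

/-!
For each `t` the matrix `diag h(t) - h(t) h(t)ᵀ` is the covariance matrix of a categorical
distribution, hence positive semidefinite. Integrating it against `Ḡ` between the features
`1{t ≤ ξ_r} e_r`, `1{t ≤ ξ_s} e_s` and `q_i(t) e_k` (`1 ≤ k ≤ m`) gives a positive semidefinite
Gram matrix whose blocks are exactly `a`, `B` and `W`. As `W` is invertible it is positive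
definite, so the Schur complement `A - B W⁻¹ Bᵀ` is positive semidefinite, and the displayed
matrix is its congruence by `diag (1 / (ρ_r g_r), 1 / (ρ_s g_s))`.
-/

open MeasureTheory Matrix Set

namespace Matrix

theorem mul_mul_transpose_apply {l o n α : Type*} [Fintype n] [CommSemiring α]
    (A : Matrix l n α) (M : Matrix n n α) (B : Matrix o n α) (i : l) (j : o) :
    (A * M * Bᵀ) i j = (fun c => A i c) ⬝ᵥ M *ᵥ fun c => B j c := by
  rw [Matrix.mul_assoc]
  simp [mul_apply, dotProduct, mulVec]

variable {n : Type*} [DecidableEq n]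

def multinomialCov (p : n → ℝ) : Matrix n n ℝ :=
  diagonal p - vecMulVec p p

theorem multinomialCov_apply (p : n → ℝ) (k l : n) :
    multinomialCov p k l = (if k = l then p k else 0) - p k * p l := by
  simp [multinomialCov, diagonal_apply, vecMulVec_apply]

variable [Fintype n]

theorem dotProduct_multinomialCov_mulVec (p w : n → ℝ) :
    star w ⬝ᵥ (multinomialCov p *ᵥ w) = ∑ k, p k * w k ^ 2 - (∑ k, p k * w k) ^ 2 := by
  simp only [star_trivial, dotProduct, mulVec, multinomialCov_apply, sub_mul, ite_mul, zero_mul,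
    Finset.sum_sub_distrib, Finset.sum_ite_eq, Finset.mem_univ, if_true, mul_sub]
  rw [sq, Finset.sum_mul_sum]
  congr 1
  · exact Finset.sum_congr rfl fun k _ => by ring
  · exact Finset.sum_congr rfl fun k _ => by
      rw [Finset.mul_sum]; exact Finset.sum_congr rfl fun l _ => by ring

theorem posSemidef_multinomialCov {p : n → ℝ} (hp : ∀ k, 0 ≤ p k) (hp1 : ∑ k, p k ≤ 1) :
    (multinomialCov p).PosSemidef := by
  refine .of_dotProduct_mulVec_nonneg
    ((isHermitian_diagonal p).sub (posSemidef_vecMulVec_self_star p).isHermitian) fun w => ?_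
  have hcs : (∑ k, p k * w k) ^ 2 ≤ (∑ k, p k) * ∑ k, p k * w k ^ 2 :=
    Finset.sum_sq_le_sum_mul_sum_of_sq_le_mul _ (fun k _ => hp k)
      (fun k _ => mul_nonneg (hp k) (sq_nonneg _)) fun k _ => (by ring : _ = _).le
  have hvar : 0 ≤ ∑ k, p k * w k ^ 2 := Finset.sum_nonneg fun k _ => mul_nonneg (hp k) (sq_nonneg _)
  have := mul_le_mul_of_nonneg_right hp1 hvar
  rw [dotProduct_multinomialCov_mulVec]
  linarith

theorem abs_multinomialCov_apply_le_one {p : n → ℝ} (hp : ∀ k, 0 ≤ p k) (hp1 : ∑ k, p k ≤ 1)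
    (k l : n) : |multinomialCov p k l| ≤ 1 := by
  have hle : ∀ k, p k ≤ 1 := fun k =>
    (Finset.single_le_sum (fun l _ => hp l) (Finset.mem_univ k)).trans hp1
  have := hp k; have := hp l; have := hle k; have := hle l
  rw [multinomialCov_apply, abs_le]
  split_ifs with hkl
  · subst hkl; constructor <;> nlinarith
  · constructor <;> nlinarith

end Matrix

open scoped ComplexOrder in
theorem Matrix.PosSemidef.schur_complement₂₂ {m n 𝕜 : Type*} [Fintype m] [Fintype n]
    [DecidableEq n] [RCLike 𝕜] {A : Matrix m m 𝕜} {B : Matrix m n 𝕜} {D : Matrix n n 𝕜}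
    (h : (fromBlocks A B Bᴴ D).PosSemidef) (hD : IsUnit D.det) :
    (A - B * D⁻¹ * Bᴴ).PosSemidef := by
  have hDpsd : D.PosSemidef := by
    convert h.submatrix Sum.inr
    ext
    simp
  have := D.invertibleOfIsUnitDet hD
  exact (PosDef.fromBlocks₂₂ A B
    (hDpsd.posDef_iff_isUnit.mpr ((isUnit_iff_isUnit_det D).mpr hD))).mp h

section Gram

variable {X : Type*} [MeasurableSpace X] {μ : Measure X}

theorem Matrix.PosSemidef.integral {n : Type*} [Fintype n] {M : X → Matrix n n ℝ}
    (hM : ∀ x, (M x).PosSemidef) (hint : ∀ i j, Integrable (fun x => M x i j) μ) :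
    (of fun i j => ∫ x, M x i j ∂μ).PosSemidef := by
  refine .of_dotProduct_mulVec_nonneg ?_ fun v => ?_
  · ext i j
    simp only [conjTranspose_apply, of_apply, star_trivial]
    exact integral_congr_ae (ae_of_all _ fun x => (hM x).isHermitian.apply i j)
  · have hexpand : ∀ A : Matrix n n ℝ, star v ⬝ᵥ (A *ᵥ v) = ∑ i, ∑ j, v i * A i j * v j := by
      simp [dotProduct, mulVec, Finset.mul_sum, mul_assoc]
    calc 0 ≤ ∫ x, star v ⬝ᵥ (M x *ᵥ v) ∂μ :=
          integral_nonneg fun x => (hM x).dotProduct_mulVec_nonneg v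
      _ = _ := by
        simp only [hexpand, of_apply]
        rw [integral_finsetSum _ fun i _ => integrable_finsetSum _ fun j _ =>
          ((hint i j).const_mul _).mul_const _]
        refine Finset.sum_congr rfl fun i _ => ?_
        rw [integral_finsetSum _ fun j _ => ((hint i j).const_mul _).mul_const _]
        simp only [integral_mul_const, integral_const_mul]

theorem Matrix.posSemidef_integral_gram {n ι : Type*} [Fintype ι] {C : X → Matrix n n ℝ}
    (hC : ∀ x, (C x).PosSemidef) (κ : ι → n) (f : ι → X → ℝ)
    (hint : ∀ α β, Integrable (fun x => f α x * C x (κ α) (κ β) * f β x) μ) :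
    (of fun α β => ∫ x, f α x * C x (κ α) (κ β) * f β x ∂μ).PosSemidef := by
  classical
  refine PosSemidef.integral (M := fun x => of fun α β => f α x * C x (κ α) (κ β) * f β x)
    (fun x => ?_) hint
  have hconj := ((hC x).submatrix κ).conjTranspose_mul_mul_same (diagonal (f · x))
  rw [diagonal_conjTranspose, star_trivial] at hconj
  convert hconj using 1
  ext α β
  simp [diagonal_mul, mul_diagonal]

theorem integrable_mul_mul_of_sq_le {f c g φ : X → ℝ} (hf : AEStronglyMeasurable f μ)
    (hc : AEStronglyMeasurable c μ) (hg : AEStronglyMeasurable g μ) (hφ : Integrable φ μ)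
    (hc1 : ∀ x, |c x| ≤ 1) (hfφ : ∀ x, f x ^ 2 ≤ φ x) (hgφ : ∀ x, g x ^ 2 ≤ φ x) :
    Integrable (fun x => f x * c x * g x) μ := by
  refine hφ.mono' ((hf.mul hc).mul hg) (ae_of_all _ fun x => ?_)
  rw [Real.norm_eq_abs, abs_mul, abs_mul]
  calc |f x| * |c x| * |g x| ≤ |f x| * 1 * |g x| := by gcongr; exact hc1 x
    _ ≤ (f x ^ 2 + g x ^ 2) / 2 := by
      nlinarith [sq_nonneg (|f x| - |g x|), sq_abs (f x), sq_abs (g x)]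
    _ ≤ φ x := by linarith [hfφ x, hgφ x]

theorem integral_indicator_one_mul {s : Set X} (hs : MeasurableSet s) (g : X → ℝ) :
    ∫ x, s.indicator 1 x * g x ∂μ = ∫ x in s, g x ∂μ := by
  rw [← integral_indicator hs]
  congr 1; ext x
  by_cases hx : x ∈ s <;> simp [hx]

end Gram

theorem measurable_nonneg_sum_le_one_of_eq_div_sum {X ι : Type*} [MeasurableSpace X] [Fintype ι]
    {w p : ι → X → ℝ} (hw : ∀ k, Measurable (w k)) (hw0 : ∀ k x, 0 ≤ w k x)
    (hp : ∀ k x, p k x = w k x / ∑ l, w l x) :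
    (∀ k, Measurable (p k)) ∧ (∀ k x, 0 ≤ p k x) ∧ ∀ x, ∑ k, p k x ≤ 1 := by
  refine ⟨fun k => ?_, fun k x => ?_, fun x => ?_⟩
  · rw [funext (hp k)]
    exact (hw k).div (Finset.measurable_sum _ fun l _ => hw l)
  · rw [hp]
    exact div_nonneg (hw0 k x) (Finset.sum_nonneg fun l _ => hw0 l x)
  · simp only [hp, ← Finset.sum_div]
    exact div_self_le_one _

theorem posSemidef_fromBlocks_cumulativeCov {m d : ℕ} (μ : Measure ℝ) [IsFiniteMeasure μ]
    (h : Fin (m + 1) → ℝ → ℝ) (hh : ∀ k, Measurable (h k)) (h0 : ∀ k t, 0 ≤ h k t)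
    (h1 : ∀ t, ∑ k, h k t ≤ 1) (q : ℝ → Fin d → ℝ) (hq : Measurable q)
    (hq2 : Integrable (fun t => ∑ i, (q t i) ^ 2) μ)
    (a : Fin (m + 1) → Fin (m + 1) → ℝ → ℝ)
    (ha : ∀ (r s : Fin (m + 1)) (x : ℝ), a r s x =
      ∫ t in Iic x, ((if r = s then h r t else 0) - h r t * h s t) ∂μ)
    (B : Fin (m + 1) → ℝ → Fin m × Fin d → ℝ)
    (hB : ∀ (r : Fin (m + 1)) (x : ℝ) (s : Fin m) (i : Fin d), B r x (s, i) =
      ∫ t in Iic x, ((if r = s.succ then h r t else 0) - h r t * h s.succ t) * q t i ∂μ)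
    (W : Matrix (Fin m × Fin d) (Fin m × Fin d) ℝ)
    (hW : ∀ (r s : Fin m) (i j : Fin d), W (r, i) (s, j) =
      ∫ t, ((if r = s then h r.succ t else 0) - h r.succ t * h s.succ t) * (q t i * q t j) ∂μ)
    (κ : Fin 2 → Fin (m + 1)) (ξ : Fin 2 → ℝ) :
    (fromBlocks (of fun i j => a (κ i) (κ j) (min (ξ i) (ξ j))) (of fun i => B (κ i) (ξ i))
      (of fun i => B (κ i) (ξ i))ᴴ W).PosSemidef := by
  -- `Γ` below is the Gram matrix of the features `1{t ≤ ξ i} e_{κ i}` and `q t j e_{s+1}`.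
  set f : Fin 2 ⊕ (Fin m × Fin d) → ℝ → ℝ :=
    Sum.elim (fun i => (Iic (ξ i)).indicator 1) (fun z t => q t z.2)
  set φ : ℝ → ℝ := fun t => 1 + ∑ i, q t i ^ 2
  have hq2_le : ∀ t i, q t i ^ 2 ≤ ∑ j, q t j ^ 2 := fun t i =>
    Finset.single_le_sum (f := fun j => q t j ^ 2) (fun j _ => sq_nonneg _) (Finset.mem_univ i)
  have hf : ∀ α, Measurable (f α) ∧ ∀ t, f α t ^ 2 ≤ φ t := by
    rintro (i | z)
    · refine ⟨measurable_const.indicator measurableSet_Iic, fun t => ?_⟩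
      have : 0 ≤ ∑ j, q t j ^ 2 := Finset.sum_nonneg fun j _ => sq_nonneg _
      by_cases ht : t ∈ Iic (ξ i) <;> simp [f, φ, ht] <;> linarith
    · exact ⟨(measurable_pi_apply z.2).comp hq, fun t => (hq2_le t z.2).trans (by simp [φ])⟩
  have hC : ∀ k l, Measurable fun t => multinomialCov (h · t) k l := fun k l => by
    simp only [multinomialCov_apply]
    split_ifs <;> fun_prop
  set Γ := of fun α β => ∫ t, f α t * multinomialCov (h · t)
    (Sum.elim κ (fun z => z.1.succ) α) (Sum.elim κ (fun z => z.1.succ) β) * f β t ∂μ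
  have hΓ : Γ.PosSemidef := posSemidef_integral_gram
    (fun t => posSemidef_multinomialCov (h0 · t) (h1 t)) _ f
    fun α β => integrable_mul_mul_of_sq_le (hf α).1.aestronglyMeasurable
      (hC _ _).aestronglyMeasurable (hf β).1.aestronglyMeasurable
      ((integrable_const 1).add hq2)
      (fun t => abs_multinomialCov_apply_le_one (h0 · t) (h1 t) _ _) (hf α).2 (hf β).2
  rw [← fromBlocks_toBlocks Γ] at hΓ
  obtain ⟨-, h21, -, -⟩ := isHermitian_fromBlocks_iff.mp hΓ.isHermitian
  have h11 : Γ.toBlocks₁₁ = of fun i j => a (κ i) (κ j) (min (ξ i) (ξ j)) := by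
    ext i j
    simp only [Γ, toBlocks₁₁, of_apply, Sum.elim_inl, f]
    simp only [ha, multinomialCov_apply]
    rw [← Iic_inter_Iic, ← integral_indicator_one_mul (measurableSet_Iic.inter measurableSet_Iic)]
    congr 1; ext t
    rw [inter_indicator_one, Pi.mul_apply]; ring
  have h12 : Γ.toBlocks₁₂ = of fun i => B (κ i) (ξ i) := by
    ext i ⟨s, j⟩
    simp only [Γ, toBlocks₁₂, of_apply, Sum.elim_inl, Sum.elim_inr, f]
    simp only [hB, multinomialCov_apply, mul_assoc, integral_indicator_one_mul measurableSet_Iic]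
  have h22 : Γ.toBlocks₂₂ = W := by
    ext ⟨s, i⟩ ⟨s', j⟩
    simp only [Γ, toBlocks₂₂, of_apply, Sum.elim_inr, f]
    simp only [hW, multinomialCov_apply, Fin.succ_inj]
    congr 1; ext t; ring
  rwa [← h21, h11, h12, h22] at hΓ

theorem drm_quantile_efficiency_posSemidef_general (m d : ℕ)
    (G : Fin (m + 1) → Measure ℝ) [∀ k, IsProbabilityMeasure (G k)]
    (q : ℝ → Fin d → ℝ) (hq : Measurable q)
    (θ : Fin (m + 1) → Fin d → ℝ)
    (ρ : Fin (m + 1) → ℝ) (hρpos : ∀ k, 0 < ρ k)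
    (hfun : Fin (m + 1) → ℝ → ℝ)
    (hhfun : ∀ k t, hfun k t =
      ρ k * Real.exp (∑ i, θ k i * q t i) /
        ∑ k', ρ k' * Real.exp (∑ i, θ k' i * q t i))
    (Gbar : Measure ℝ) (hGbar : Gbar = ∑ k, ENNReal.ofReal (ρ k) • G k)
    (hq2int : Integrable (fun t => ∑ i, (q t i) ^ 2) Gbar)
    (a : Fin (m + 1) → Fin (m + 1) → ℝ → ℝ)
    (ha : ∀ (r s : Fin (m + 1)) (x : ℝ), a r s x =
      ∫ t in Set.Iic x, ((if r = s then hfun r t else 0) - hfun r t * hfun s t) ∂Gbar)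
    (B : Fin (m + 1) → ℝ → Fin m × Fin d → ℝ)
    (hB : ∀ (r : Fin (m + 1)) (x : ℝ) (s : Fin m) (i : Fin d), B r x (s, i) =
      ∫ t in Set.Iic x,
        ((if r = s.succ then hfun r t else 0) - hfun r t * hfun s.succ t) * q t i ∂Gbar)
    (W : Matrix (Fin m × Fin d) (Fin m × Fin d) ℝ)
    (hW : ∀ (r s : Fin m) (i j : Fin d), W (r, i) (s, j) =
      ∫ t, ((if r = s then hfun r.succ t else 0) - hfun r.succ t * hfun s.succ t) *
        (q t i * q t j) ∂Gbar)
    (hWinv : IsUnit W.det)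
    (r s : Fin (m + 1)) (ξr ξs : ℝ) (gr gs : ℝ) :
    Matrix.PosSemidef
      !![(a r r ξr - ∑ c : Fin m × Fin d, B r ξr c * (W⁻¹).mulVec (B r ξr) c) /
          (ρ r ^ 2 * gr ^ 2),
        (a r s (min ξr ξs) - ∑ c : Fin m × Fin d, B r ξr c * (W⁻¹).mulVec (B s ξs) c) /
          (ρ r * ρ s * gr * gs);
        (a r s (min ξr ξs) - ∑ c : Fin m × Fin d, B r ξr c * (W⁻¹).mulVec (B s ξs) c) /
          (ρ r * ρ s * gr * gs),
        (a s s ξs - ∑ c : Fin m × Fin d, B s ξs c * (W⁻¹).mulVec (B s ξs) c) /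
          (ρ s ^ 2 * gs ^ 2)] := by
  have hGfin : ∀ k, IsFiniteMeasure (ENNReal.ofReal (ρ k) • G k) := fun k => ⟨by simp⟩
  subst hGbar
  obtain ⟨hmeas, h0, h1⟩ := measurable_nonneg_sum_le_one_of_eq_div_sum (by fun_prop)
    (fun k t => mul_nonneg (hρpos k).le (Real.exp_pos _).le) hhfun
  have hS := (posSemidef_fromBlocks_cumulativeCov _ hfun hmeas h0 h1 q hq hq2int a ha B hB W hW
    ![r, s] ![ξr, ξs]).schur_complement₂₂ hWinv
  -- The `(1, 0)` entry of the Schur complement involves `a s r` and `B s ⬝ W⁻¹ B r`.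
  have hS10 := hS.isHermitian.apply 1 0
  simp only [conjTranspose_eq_transpose_of_trivial, Fin.isValue, Matrix.sub_apply, of_apply,
    cons_val_zero, cons_val_one, cons_val_fin_one, mul_mul_transpose_apply, dotProduct,
    star_trivial] at hS10
  set D : Matrix (Fin 2) (Fin 2) ℝ := diagonal ![(ρ r * gr)⁻¹, (ρ s * gs)⁻¹]
  refine (congrArg PosSemidef ?_).mpr (hS.conjTranspose_mul_mul_same D)
  ext i j
  fin_cases i <;> fin_cases j <;>
    simp only [D, Fin.zero_eta, Fin.mk_one, Fin.isValue, of_apply, cons_val', cons_val_zero,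
      cons_val_one, cons_val_fin_one, _root_.mul_inv_rev, conjTranspose_eq_transpose_of_trivial,
      diagonal_transpose, mul_diagonal, diagonal_mul, Matrix.sub_apply, min_self,
      mul_mul_transpose_apply, dotProduct] <;>
    first | (rw [← hS10]; ring) | ring

/-- the difference `Σ_EM - Σ_EL` of the asymptotic covariance matrices of a
pair of empirical quantiles and of empirical-likelihood quantiles (at points `ξ_r, ξ_s`
with density values `g_r, g_s > 0`) is positive semidefinite. -/
theorem drm_quantile_efficiency_posSemidef (m d : ℕ) (hm : 1 ≤ m) (hd : 1 ≤ d)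
    (G : Fin (m + 1) → Measure ℝ) [∀ k, IsProbabilityMeasure (G k)]
    (q : ℝ → Fin d → ℝ) (hq : Measurable q)
    (θ : Fin (m + 1) → Fin d → ℝ) (hθ0 : θ 0 = 0)
    (hG : ∀ k, G k =
      (G 0).withDensity fun t => ENNReal.ofReal (Real.exp (∑ i, θ k i * q t i)))
    (ρ : Fin (m + 1) → ℝ) (hρpos : ∀ k, 0 < ρ k) (hρsum : ∑ k, ρ k = 1)
    (hfun : Fin (m + 1) → ℝ → ℝ)
    (hhfun : ∀ k t, hfun k t =
      ρ k * Real.exp (∑ i, θ k i * q t i) /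
        ∑ k', ρ k' * Real.exp (∑ i, θ k' i * q t i))
    (Gbar : Measure ℝ) (hGbar : Gbar = ∑ k, ENNReal.ofReal (ρ k) • G k)
    (hq2int : Integrable (fun t => ∑ i, (q t i) ^ 2) Gbar)
    (a : Fin (m + 1) → Fin (m + 1) → ℝ → ℝ)
    (ha : ∀ (r s : Fin (m + 1)) (x : ℝ), a r s x =
      ∫ t in Set.Iic x, ((if r = s then hfun r t else 0) - hfun r t * hfun s t) ∂Gbar)
    (B : Fin (m + 1) → ℝ → Fin m × Fin d → ℝ)
    (hB : ∀ (r : Fin (m + 1)) (x : ℝ) (s : Fin m) (i : Fin d), B r x (s, i) =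
      ∫ t in Set.Iic x,
        ((if r = s.succ then hfun r t else 0) - hfun r t * hfun s.succ t) * q t i ∂Gbar)
    (W : Matrix (Fin m × Fin d) (Fin m × Fin d) ℝ)
    (hW : ∀ (r s : Fin m) (i j : Fin d), W (r, i) (s, j) =
      ∫ t, ((if r = s then hfun r.succ t else 0) - hfun r.succ t * hfun s.succ t) *
        (q t i * q t j) ∂Gbar)
    (hWinv : IsUnit W.det)
    (r s : Fin (m + 1)) (ξr ξs : ℝ) (gr gs : ℝ) (hgr : 0 < gr) (hgs : 0 < gs) :
    Matrix.PosSemidef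
      !![(a r r ξr - ∑ c : Fin m × Fin d, B r ξr c * (W⁻¹).mulVec (B r ξr) c) /
          (ρ r ^ 2 * gr ^ 2),
        (a r s (min ξr ξs) - ∑ c : Fin m × Fin d, B r ξr c * (W⁻¹).mulVec (B s ξs) c) /
          (ρ r * ρ s * gr * gs);
        (a r s (min ξr ξs) - ∑ c : Fin m × Fin d, B r ξr c * (W⁻¹).mulVec (B s ξs) c) /
          (ρ r * ρ s * gr * gs),
        (a s s ξs - ∑ c : Fin m × Fin d, B s ξs c * (W⁻¹).mulVec (B s ξs) c) /
          (ρ s ^ 2 * gs ^ 2)] :=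
  drm_quantile_efficiency_posSemidef_general m d G q hq θ ρ hρpos hfun hhfun Gbar hGbar hq2int a ha
    B hB W hW hWinv r s ξr ξs gr gs
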